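/- Let n ≥ 1 and d ≥ 1. If C ⊆ X^n is a code whose distinct words are at pairwise Hamming distance at least d, and A ⊆ X^n is a set of diameter at most d − 1 (every two of its elements are at Hamming distance at most d − 1), then |C| · |A| ≤ n · 2^(n−1). -/

import Mathlib

/-- A ternary word has exactly one coordinate equal to 0 (the `*` symbol). -/
def exactlyOneStar {n : ℕ} (x : Fin n → Fin 3) : Prop :=
  (Finset.univ.filter (fun i => x i = 0)).card = 1

/-!
The Hamming isometries of `Fin n → Fin 3` fixing the all-`*` word `0` act transitively on `Xⁿ`:
a coordinate permutation moves the star, and swapping the symbols `1, 2` in single coordinates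
does the rest. No such isometry maps two distinct codewords into the anticode, as their distance
is at least `d` while `A` has diameter below `d`. Double counting the triples `(g, c, a)` with
`g • c = a`, each pair `(c, a)` is hit by `|G| / |Xⁿ|` group elements and each `g` by at most
one pair, whence `|C| · |A| · |G| / |Xⁿ| ≤ |G|`.
-/

open Finset

section DoubleCounting

variable {G α : Type*} [Group G] [Fintype G] [MulAction G α] [DecidableEq α]

theorem card_filter_smul_eq_eq {x y a b : α} (hyx : ∃ h : G, h • y = x)
    (hab : ∃ k : G, k • a = b) : #{g : G | g • x = a} = #{g : G | g • y = b} := by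
  obtain ⟨h, rfl⟩ := hyx
  obtain ⟨k, rfl⟩ := hab
  refine card_equiv ((Equiv.mulLeft k).trans (Equiv.mulRight h)) fun g => ?_
  simp [mul_smul]

theorem card_mul_card_le_card_of_forall_smul_mem {X C A : Finset α}
    (hX : ∀ g : G, ∀ x ∈ X, g • x ∈ X) (htrans : ∀ x ∈ X, ∀ y ∈ X, ∃ g : G, g • x = y)
    (hC : C ⊆ X) (hA : A ⊆ X)
    (hCA : ∀ g : G, ∀ c ∈ C, ∀ c' ∈ C, g • c ∈ A → g • c' ∈ A → c = c') :
    #C * #A ≤ #X := by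
  obtain rfl | ⟨x₀, hx₀⟩ := C.eq_empty_or_nonempty
  · simp
  set m := #{g : G | g • x₀ = x₀}
  have hfiber : ∀ x ∈ X, ∀ a ∈ X, #{g : G | g • x = a} = m := fun x hx a ha =>
    card_filter_smul_eq_eq (htrans _ (hC hx₀) _ hx) (htrans _ ha _ (hC hx₀))
  have hm : 0 < m := card_pos.2 ⟨1, by simp⟩
  have hXm : #X * m = Fintype.card G * 1 :=
    card_mul_eq_card_mul (fun a (g : G) => g • x₀ = a) (fun a ha => hfiber _ (hC hx₀) _ ha)
      fun g _ => by
        rw [bipartiteBelow, filter_eq, if_pos (hX g _ (hC hx₀)), card_singleton]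
  have hCAm : #(C ×ˢ A) * m ≤ Fintype.card G * 1 :=
    card_mul_le_card_mul (fun p (g : G) => g • p.1 = p.2)
      (fun p hp => by
        rw [mem_product] at hp
        exact (hfiber _ (hC hp.1) _ (hA hp.2)).ge)
      fun g _ => card_le_one.2 fun p hp q hq => by
        simp only [mem_bipartiteBelow, mem_product] at hp hq
        have hpq : p.1 = q.1 :=
          hCA g _ hp.1.1 _ hq.1.1 (hp.2 ▸ hp.1.2) (hq.2 ▸ hq.1.2)
        exact Prod.ext hpq (by rw [← hp.2, ← hq.2, hpq])
  rw [card_product, ← hXm] at hCAm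
  exact Nat.le_of_mul_le_mul_right hCAm hm

end DoubleCounting

section ZeroFixingIsometries

variable {ι β : Type*} [DecidableEq β] [Zero β]

theorem exists_piCongrRight_apply_eq {x y : ι → β} (hxy : ∀ i, x i = 0 ↔ y i = 0) :
    ∃ σ : ι → Equiv.Perm β, (∀ i, σ i 0 = 0) ∧ Equiv.piCongrRight σ x = y := by
  refine ⟨fun i => Equiv.swap (x i) (y i), fun i => ?_, funext fun i => Equiv.swap_apply_left _ _⟩
  by_cases hx : x i = 0
  · simp [hx, (hxy i).1 hx]
  · exact Equiv.swap_apply_of_ne_of_ne (Ne.symm hx) (Ne.symm (mt (hxy i).2 hx))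

variable [Fintype ι]

variable (ι β) in
def zeroFixingIsometries : Subgroup (Equiv.Perm (ι → β)) where
  carrier := {e | e 0 = 0 ∧ ∀ x y, hammingDist (e x) (e y) = hammingDist x y}
  one_mem' := ⟨rfl, fun _ _ => rfl⟩
  mul_mem' := fun ⟨ha₀, ha⟩ ⟨hb₀, hb⟩ =>
    ⟨by simp [ha₀, hb₀], fun x y => by simp [ha, hb]⟩
  inv_mem' := fun {e} ⟨he₀, he⟩ =>
    ⟨e.symm_apply_eq.2 he₀.symm, fun x y => by rw [← he]; simp⟩

theorem hammingNorm_apply_of_mem_zeroFixingIsometries {e : Equiv.Perm (ι → β)}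
    (he : e ∈ zeroFixingIsometries ι β) (x : ι → β) : hammingNorm (e x) = hammingNorm x := by
  rw [← hammingDist_zero_right, ← he.1, he.2, hammingDist_zero_right]

theorem piCongrRight_mem_zeroFixingIsometries {σ : ι → Equiv.Perm β} (hσ : ∀ i, σ i 0 = 0) :
    Equiv.piCongrRight σ ∈ zeroFixingIsometries ι β :=
  ⟨funext hσ, fun _ _ => hammingDist_comp (fun i => σ i) fun i => (σ i).injective⟩

theorem arrowCongr_mem_zeroFixingIsometries (π : Equiv.Perm ι) :
    Equiv.arrowCongr π (Equiv.refl β) ∈ zeroFixingIsometries ι β :=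
  ⟨rfl, fun x y => (card_equiv π fun i => by simp).symm⟩

theorem exists_mem_zeroFixingIsometries_apply_eq [DecidableEq ι] {x y : ι → β} {i j : ι}
    (hx : ∀ k, x k = 0 ↔ k = i) (hy : ∀ k, y k = 0 ↔ k = j) :
    ∃ e ∈ zeroFixingIsometries ι β, e x = y := by
  set π := Equiv.arrowCongr (Equiv.swap i j) (Equiv.refl β)
  obtain ⟨σ, hσ₀, hσ⟩ := exists_piCongrRight_apply_eq (x := π x) (y := y) fun k => by
    simp [π, hx, hy, Equiv.swap_apply_eq_iff]
  exact ⟨Equiv.piCongrRight σ * π, mul_mem (piCongrRight_mem_zeroFixingIsometries hσ₀)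
    (arrowCongr_mem_zeroFixingIsometries _), hσ⟩

end ZeroFixingIsometries

variable {n : ℕ}

instance : DecidablePred (@exactlyOneStar n) := fun _ =>
  inferInstanceAs (Decidable (_ = 1))

theorem exactlyOneStar_iff {x : Fin n → Fin 3} :
    exactlyOneStar x ↔ ∃ i, ∀ k, x k = 0 ↔ k = i := by
  simp [exactlyOneStar, card_eq_one, Finset.ext_iff]

theorem exactlyOneStar_iff_hammingNorm {x : Fin n → Fin 3} :
    exactlyOneStar x ↔ hammingNorm x + 1 = n := by
  have := card_filter_add_card_filter_not (s := univ) (fun i => x i = 0)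
  rw [card_univ, Fintype.card_fin] at this
  simp only [exactlyOneStar, hammingNorm, ne_eq]
  omega

theorem card_filter_exactlyOneStar :
    #{x : Fin n → Fin 3 | exactlyOneStar x} = n * 2 ^ (n - 1) := by
  set t : Fin n → Finset (Fin n → Fin 3) :=
    fun i => Fintype.piFinset fun k => if k = i then {0} else {1, 2}
  have hmem : ∀ i x, x ∈ t i ↔ ∀ k, x k = 0 ↔ k = i := fun i x => by
    refine Fintype.mem_piFinset.trans (forall_congr' fun k => ?_)
    have hnz : ∀ v : Fin 3, v ∈ ({1, 2} : Finset (Fin 3)) ↔ v ≠ 0 := by decide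
    split_ifs with hk <;> simp [hk, hnz]
  have hunion : ({x | exactlyOneStar x} : Finset (Fin n → Fin 3)) = univ.biUnion t := by
    ext x
    simp [exactlyOneStar_iff, hmem]
  have hdisj : ((univ : Finset (Fin n)) : Set (Fin n)).PairwiseDisjoint t := by
    intro i _ j _ hij
    refine disjoint_left.2 fun x hi hj => hij ?_
    exact ((hmem j x).1 hj i).1 (((hmem i x).1 hi i).2 rfl)
  have hcard : ∀ i, #(t i) = 2 ^ (n - 1) := fun i => by
    simp [t, apply_ite, prod_ite, filter_ne']
  rw [hunion, card_biUnion hdisj]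
  simp [hcard]

theorem exactlyOneStar_apply_of_mem_zeroFixingIsometries {e : Equiv.Perm (Fin n → Fin 3)}
    (he : e ∈ zeroFixingIsometries (Fin n) (Fin 3)) {x : Fin n → Fin 3} (hx : exactlyOneStar x) :
    exactlyOneStar (e x) := by
  rwa [exactlyOneStar_iff_hammingNorm, hammingNorm_apply_of_mem_zeroFixingIsometries he,
    ← exactlyOneStar_iff_hammingNorm]

theorem exists_mem_zeroFixingIsometries_apply_eq_of_exactlyOneStar {x y : Fin n → Fin 3}
    (hx : exactlyOneStar x) (hy : exactlyOneStar y) :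
    ∃ e ∈ zeroFixingIsometries (Fin n) (Fin 3), e x = y := by
  obtain ⟨i, hi⟩ := exactlyOneStar_iff.1 hx
  obtain ⟨j, hj⟩ := exactlyOneStar_iff.1 hy
  exact exists_mem_zeroFixingIsometries_apply_eq hi hj

theorem code_anticode_bound (n d : ℕ)
    (C A : Finset (Fin n → Fin 3))
    (hCX : ∀ x ∈ C, exactlyOneStar x)
    (hAX : ∀ x ∈ A, exactlyOneStar x)
    (hCdist : ∀ x ∈ C, ∀ y ∈ C, x ≠ y → d ≤ hammingDist x y)
    (hAdiam : ∀ x ∈ A, ∀ y ∈ A, hammingDist x y ≤ d - 1) :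
    C.card * A.card ≤ n * 2 ^ (n - 1) := by
  classical
  rw [← card_filter_exactlyOneStar]
  refine card_mul_card_le_card_of_forall_smul_mem (G := zeroFixingIsometries (Fin n) (Fin 3))
    ?_ ?_ (fun x hx => by simpa using hCX x hx) (fun x hx => by simpa using hAX x hx) ?_
  · rintro ⟨e, he⟩ x hx
    simpa using exactlyOneStar_apply_of_mem_zeroFixingIsometries he (mem_filter.1 hx).2
  · intro x hx y hy
    obtain ⟨e, he, rfl⟩ := exists_mem_zeroFixingIsometries_apply_eq_of_exactlyOneStar
      (mem_filter.1 hx).2 (mem_filter.1 hy).2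
    exact ⟨⟨e, he⟩, rfl⟩
  · rintro ⟨e, he⟩ c hc c' hc' ha ha'
    by_contra hne
    have hdiam : hammingDist (e c) (e c') ≤ d - 1 := hAdiam _ ha _ ha'
    have hdist : d ≤ hammingDist (e c) (e c') := he.2 c c' ▸ hCdist c hc c' hc' hne
    have hpos : 0 < hammingDist (e c) (e c') := hammingDist_pos.2 (e.injective.ne hne)
    omega
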